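/- Let s be a schedule with commits in which every conflicting pair is of 'committed-before' form; that is, for every pair of conflicting operations consisting of an operation p of transaction t_i at an earlier position than an operation q of transaction t_j, the commit position of t_i is earlier than the position of q (so every conflict is one of the partial order pairs WCR, WCW, or RCW, and no WR, WW, or RW conflict occurs). Then the conflict graph of s is acyclic, i.e., s contains no conflict cycle and hence no data anomaly (the schedule is serializable). -/
import Mathlib


/-- The kind of an operation: read or write. -/
inductive OpKind where
  | read : OpKind
  | write : OpKind
deriving DecidableEq

/-- An operation: a transaction identifier, an object identifier, and a kind. -/
structure Op where
  txn : ℕ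
  obj : ℕ
  kind : OpKind

/-- Transaction `t` appears in the schedule `s`. -/
def TxnIn (s : List Op) (t : ℕ) : Prop :=
  ∃ (i : ℕ) (p : Op), s[i]? = some p ∧ p.txn = t

/-- A schedule with commits: a list of operations, together with a commit
position for each transaction such that every operation of a transaction occurs
at an earlier position than its commit position, and distinct transactions
(appearing in the schedule) have distinct commit positions. -/
structure CommittedSchedule where
  ops : List Op
  commitPos : ℕ → ℕ
  ops_lt_commit : ∀ (i : ℕ) (p : Op), ops[i]? = some p → i < commitPos p.txn
  commit_inj : ∀ t t' : ℕ, TxnIn ops t → TxnIn ops t' →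
    commitPos t = commitPos t' → t = t'

/-- A conflicting pair of 'committed-before' form from `ti` to `tj`: an
operation `p` of `ti` at an earlier position than a conflicting operation `q`
of `tj`, with the commit position of `ti` earlier than the position of `q`
(one of the partial order pairs WCR, WCW, or RCW). -/
def CommittedBeforeConflict (s : CommittedSchedule) (ti tj : ℕ) : Prop :=
  ∃ (i j : ℕ) (p q : Op), i < j ∧ s.ops[i]? = some p ∧ s.ops[j]? = some q ∧
    p.txn = ti ∧ q.txn = tj ∧ ti ≠ tj ∧ p.obj = q.obj ∧
    (p.kind = OpKind.write ∨ q.kind = OpKind.write) ∧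
    s.commitPos ti < j

/-- A conflict edge (on some object) from `t₁` to `t₂` in the conflict graph of
schedule `s`. -/
def ConflictEdge (s : List Op) (t₁ t₂ : ℕ) : Prop :=
  ∃ (i j : ℕ) (p q : Op), i < j ∧ s[i]? = some p ∧ s[j]? = some q ∧
    p.txn = t₁ ∧ q.txn = t₂ ∧ t₁ ≠ t₂ ∧ p.obj = q.obj ∧
    (p.kind = OpKind.write ∨ q.kind = OpKind.write)

/-- If every conflicting pair of a schedule with commits is of 'committed-before'
form (only WCR, WCW, RCW partial order pairs; no WR, WW, or RW conflicts), then
its conflict graph is acyclic: the schedule has no conflict cycle, hence no data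
anomaly (it is serializable). -/
theorem all_committedBefore_implies_acyclic
    (s : CommittedSchedule)
    (hcb : ∀ (i j : ℕ) (p q : Op), i < j →
      s.ops[i]? = some p → s.ops[j]? = some q →
      p.txn ≠ q.txn → p.obj = q.obj →
      (p.kind = OpKind.write ∨ q.kind = OpKind.write) →
      s.commitPos p.txn < j) :
    ¬ ∃ (n : ℕ) (hn : 0 < n) (t : Fin n → ℕ),
      Function.Injective t ∧
      ∀ k : Fin n,
        ConflictEdge s.ops (t k) (t ⟨(k.val + 1) % n, Nat.mod_lt _ hn⟩) := by
  rintro ⟨n, hn, t, -, hcyc⟩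
  -- any conflict edge increases commitPos
  have key : ∀ a b, ConflictEdge s.ops a b → s.commitPos a < s.commitPos b := by
    rintro a b ⟨i, j, p, q, hij, hi, hj, hp, hq, hne, hobj, hw⟩
    have h1 : s.commitPos p.txn < j := hcb i j p q hij hi hj (hp ▸ hq ▸ hne) hobj hw
    have h2 : j < s.commitPos q.txn := s.ops_lt_commit j q hj
    rw [← hp, ← hq]; omega
  set g : ℕ → ℕ := fun k => s.commitPos (t ⟨k % n, Nat.mod_lt _ hn⟩) with hg
  have hstep : ∀ k, g k < g (k + 1) := by
    intro k
    have := key _ _ (hcyc ⟨k % n, Nat.mod_lt _ hn⟩)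
    simpa [hg, Nat.mod_add_mod] using this
  have hmono : StrictMono g := strictMono_nat_of_lt_succ hstep
  have : g 0 < g n := hmono hn
  simp [hg, Nat.mod_self, Nat.zero_mod] at this
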